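/- For every triangulation T of P and every i ∈ [n], the spine of T contains a directed path from i to i+1 or a directed path from i+1 to i (the labels i and i+1 are always comparable in the transitive closure of the spine). -/
import Mathlib


attribute [local instance] Classical.propDecidable

noncomputable section

namespace Spines

/-- Position of vertex `v ∈ {0,…,n+2}` in the counterclockwise boundary cyclic order:
`0`, then the elements of `D` in increasing order, then `n+2`, then the elements of `U`
in decreasing order. -/
def pos (n : ℕ) (D U : Finset ℕ) (v : ℕ) : ℕ :=
  if v = 0 then 0
  else if v = n + 2 then D.card + 1
  else if v ∈ D then 1 + (D.filter (fun d => d < v)).card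
  else D.card + 2 + (U.filter (fun u => v < u)).card

/-- Cyclic distance from `a` to `v` in counterclockwise direction. -/
def relpos (n : ℕ) (D U : Finset ℕ) (a v : ℕ) : ℕ :=
  (pos n D U v + (n + 3) - pos n D U a) % (n + 3)

/-- `v` lies strictly inside the counterclockwise boundary arc from `a` to `b`. -/
def StrictBetween (n : ℕ) (D U : Finset ℕ) (a b v : ℕ) : Prop :=
  v ≤ n + 2 ∧ 0 < relpos n D U a v ∧ relpos n D U a v < relpos n D U a b

/-- A diagonal, encoded as an ordered pair `(a,b)` with `a < b ≤ n+2`. -/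
def IsDiag (n : ℕ) (δ : ℕ × ℕ) : Prop := δ.1 < δ.2 ∧ δ.2 ≤ n + 2

/-- A boundary edge: the endpoints are adjacent in the cyclic order. -/
def IsBoundaryEdge (n : ℕ) (D U : Finset ℕ) (δ : ℕ × ℕ) : Prop :=
  IsDiag n δ ∧ (relpos n D U δ.1 δ.2 = 1 ∨ relpos n D U δ.2 δ.1 = 1)

/-- An internal diagonal. -/
def IsInternalDiag (n : ℕ) (D U : Finset ℕ) (δ : ℕ × ℕ) : Prop :=
  IsDiag n δ ∧ ¬ IsBoundaryEdge n D U δ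

/-- Two diagonals cross: the four endpoints are pairwise distinct and exactly one
endpoint of the second lies strictly inside each of the two arcs determined by the first. -/
def Cross (n : ℕ) (D U : Finset ℕ) (δ δ' : ℕ × ℕ) : Prop :=
  δ.1 ≠ δ.2 ∧ δ'.1 ≠ δ'.2 ∧ δ.1 ≠ δ'.1 ∧ δ.1 ≠ δ'.2 ∧ δ.2 ≠ δ'.1 ∧ δ.2 ≠ δ'.2 ∧
  ((StrictBetween n D U δ.1 δ.2 δ'.1 ∧ StrictBetween n D U δ.2 δ.1 δ'.2) ∨
   (StrictBetween n D U δ.1 δ.2 δ'.2 ∧ StrictBetween n D U δ.2 δ.1 δ'.1))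

/-- A triangulation: a maximal set of pairwise non-crossing internal diagonals. -/
def IsTriangulation (n : ℕ) (D U : Finset ℕ) (T : Finset (ℕ × ℕ)) : Prop :=
  (∀ δ ∈ T, IsInternalDiag n D U δ) ∧
  (∀ δ ∈ T, ∀ δ' ∈ T, ¬ Cross n D U δ δ') ∧
  (∀ δ, IsInternalDiag n D U δ → δ ∉ T → ∃ δ' ∈ T, Cross n D U δ δ')

/-- `a` and `b` (with `a < b`) are joined by a diagonal of `T` or a boundary edge. -/
def EdgeOf (n : ℕ) (D U : Finset ℕ) (T : Finset (ℕ × ℕ)) (a b : ℕ) : Prop :=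
  (a, b) ∈ T ∨ IsBoundaryEdge n D U (a, b)

/-- `{i,j,k}` with `i<j<k` is a triangle of the triangulation `T`. -/
def IsTriangleOf (n : ℕ) (D U : Finset ℕ) (T : Finset (ℕ × ℕ)) (i j k : ℕ) : Prop :=
  i < j ∧ j < k ∧ k ≤ n + 2 ∧
    EdgeOf n D U T i j ∧ EdgeOf n D U T j k ∧ EdgeOf n D U T i k

/-- `Bel δ`: labels in `[n+1]` strictly inside the ccw arc from `δ.1` to `δ.2`,
together with the endpoints of `δ` lying in `U`. -/
def Bel (n : ℕ) (D U : Finset ℕ) (δ : ℕ × ℕ) : Finset ℕ :=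
  (Finset.Icc 1 (n + 1)).filter
    (fun j => StrictBetween n D U δ.1 δ.2 j ∨ (j ∈ U ∧ (j = δ.1 ∨ j = δ.2)))

def bel (n : ℕ) (D U : Finset ℕ) (δ : ℕ × ℕ) : ℕ := (Bel n D U δ).card

def Abo (n : ℕ) (D U : Finset ℕ) (δ : ℕ × ℕ) : Finset ℕ :=
  Finset.Icc 1 (n + 1) \ Bel n D U δ

/-- The coordinates of the point `x(T)` associated to a triangulation `T`. -/
def xcoord (n : ℕ) (D U : Finset ℕ) (T : Finset (ℕ × ℕ)) (j : ℕ) : ℝ :=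
  if h : ∃ p : ℕ × ℕ, IsTriangleOf n D U T p.1 j p.2 then
    if j ∈ D then
      ((bel n D U (h.choose.1, j) : ℝ) + 1) * ((bel n D U (j, h.choose.2) : ℝ) + 1)
    else
      ((n : ℝ) + 2) -
        (((n : ℝ) + 2) - (bel n D U (h.choose.1, j) : ℝ)) *
          (((n : ℝ) + 2) - (bel n D U (j, h.choose.2) : ℝ))
  else 0

/-- Middle vertex of the triple `{a,b,c}` with `a < b` and `c ∉ {a,b}`. -/
def midOf (a b c : ℕ) : ℕ := if c < a then a else if c < b then c else b

/-- `c` is the third vertex of a triangle of `T` containing the diagonal `δ`. -/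
def TriWith (n : ℕ) (D U : Finset ℕ) (T : Finset (ℕ × ℕ)) (δ : ℕ × ℕ) (c : ℕ) : Prop :=
  if c < δ.1 then IsTriangleOf n D U T c δ.1 δ.2
  else if c < δ.2 then IsTriangleOf n D U T δ.1 c δ.2
  else IsTriangleOf n D U T δ.1 δ.2 c

/-- `s_δ`: middle vertex of the triangle of `T` below `δ` (third vertex strictly
inside the ccw arc from `δ.1` to `δ.2`). -/
def spineSrc (n : ℕ) (D U : Finset ℕ) (T : Finset (ℕ × ℕ)) (δ : ℕ × ℕ) : ℕ :=
  if h : ∃ c, StrictBetween n D U δ.1 δ.2 c ∧ TriWith n D U T δ c then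
    midOf δ.1 δ.2 h.choose
  else 0

/-- `t_δ`: middle vertex of the triangle of `T` above `δ` (third vertex strictly
inside the ccw arc from `δ.2` to `δ.1`). -/
def spineTgt (n : ℕ) (D U : Finset ℕ) (T : Finset (ℕ × ℕ)) (δ : ℕ × ℕ) : ℕ :=
  if h : ∃ c, StrictBetween n D U δ.2 δ.1 c ∧ TriWith n D U T δ c then
    midOf δ.1 δ.2 h.choose
  else 0

/-- `(p,q)` is an arc of the spine of `T`. -/
def SpineArc (n : ℕ) (D U : Finset ℕ) (T : Finset (ℕ × ℕ)) (p q : ℕ) : Prop :=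
  ∃ δ ∈ T, spineSrc n D U T δ = p ∧ spineTgt n D U T δ = q

/-- The finite set of all triangulations of the polygon. -/
def allTri (n : ℕ) (D U : Finset ℕ) : Finset (Finset (ℕ × ℕ)) :=
  ((Finset.range (n + 3) ×ˢ Finset.range (n + 3)).filter
      (fun δ => IsInternalDiag n D U δ)).powerset.filter
    (fun T => IsTriangulation n D U T)

end Spines

namespace Spines

section Aux

def btwn (x y z : ℕ) : Prop := (x < y ∧ y < z) ∨ (y < z ∧ z < x) ∨ (z < x ∧ x < y)

def key (n : ℕ) (U : Finset ℕ) (v : ℕ) : ℕ := if v ∈ U then 2 * (n + 2) - v else v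

variable {n : ℕ} {D U : Finset ℕ}

lemma U_sub (hUD : D ∪ U = Finset.Icc 1 (n + 1)) : U ⊆ Finset.Icc 1 (n + 1) := by
  rw [← hUD]; exact Finset.subset_union_right

lemma D_sub (hUD : D ∪ U = Finset.Icc 1 (n + 1)) : D ⊆ Finset.Icc 1 (n + 1) := by
  rw [← hUD]; exact Finset.subset_union_left

lemma mem_U_bounds (hUD : D ∪ U = Finset.Icc 1 (n + 1)) {u : ℕ} (h : u ∈ U) :
    1 ≤ u ∧ u ≤ n + 1 := Finset.mem_Icc.1 (U_sub hUD h)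

lemma mem_D_bounds (hUD : D ∪ U = Finset.Icc 1 (n + 1)) {d : ℕ} (h : d ∈ D) :
    1 ≤ d ∧ d ≤ n + 1 := Finset.mem_Icc.1 (D_sub hUD h)

lemma mem_D_notU (hdisj : Disjoint D U) {d : ℕ} (h : d ∈ D) : d ∉ U :=
  Finset.disjoint_left.1 hdisj h

lemma low_cases (hUD : D ∪ U = Finset.Icc 1 (n + 1)) {v : ℕ} (hv : v ≤ n + 2)
    (hvU : v ∉ U) : v = 0 ∨ v = n + 2 ∨ v ∈ D := by
  by_cases h0 : v = 0
  · exact Or.inl h0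
  by_cases h2 : v = n + 2
  · exact Or.inr (Or.inl h2)
  have : v ∈ D ∪ U := by rw [hUD]; exact Finset.mem_Icc.2 ⟨by omega, by omega⟩
  rcases Finset.mem_union.1 this with h | h
  · exact Or.inr (Or.inr h)
  · exact absurd h hvU

lemma pos_zero : pos n D U 0 = 0 := by simp [pos]

lemma pos_top : pos n D U (n + 2) = D.card + 1 := by simp [pos]

lemma pos_D (hUD : D ∪ U = Finset.Icc 1 (n + 1)) {d : ℕ} (h : d ∈ D) :
    pos n D U d = 1 + (D.filter (fun x => x < d)).card := by
  have hb := mem_D_bounds hUD h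
  have h0 : d ≠ 0 := by omega
  have h2 : d ≠ n + 2 := by omega
  simp [pos, h0, h2, h]

lemma pos_U (hUD : D ∪ U = Finset.Icc 1 (n + 1)) (hdisj : Disjoint D U) {u : ℕ}
    (h : u ∈ U) :
    pos n D U u = D.card + 2 + (U.filter (fun x => u < x)).card := by
  have hb := mem_U_bounds hUD h
  have h0 : u ≠ 0 := by omega
  have h2 : u ≠ n + 2 := by omega
  have hD : u ∉ D := fun hd => mem_D_notU hdisj hd h
  simp [pos, h0, h2, hD]

lemma cardDU (hUD : D ∪ U = Finset.Icc 1 (n + 1)) (hdisj : Disjoint D U) :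
    D.card + U.card = n + 1 := by
  rw [← Finset.card_union_of_disjoint hdisj, hUD, Nat.card_Icc]; omega

lemma filterD_card_lt {d : ℕ} (h : d ∈ D) :
    (D.filter (fun x => x < d)).card < D.card := by
  apply Finset.card_lt_card
  refine ⟨Finset.filter_subset _ _, fun hsub => ?_⟩
  have := hsub h
  simp at this

lemma filterU_card_lt {u : ℕ} (h : u ∈ U) :
    (U.filter (fun x => u < x)).card < U.card := by
  apply Finset.card_lt_card
  refine ⟨Finset.filter_subset _ _, fun hsub => ?_⟩
  have := hsub h
  simp at this

lemma pos_lt (hUD : D ∪ U = Finset.Icc 1 (n + 1)) (hdisj : Disjoint D U) {v : ℕ}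
    (hv : v ≤ n + 2) : pos n D U v < n + 3 := by
  have hc := cardDU hUD hdisj
  by_cases hu : v ∈ U
  · have := filterU_card_lt hu
    rw [pos_U hUD hdisj hu]; omega
  · rcases low_cases hUD hv hu with h | h | h
    · subst h; rw [pos_zero]; omega
    · subst h; rw [pos_top]; omega
    · have := filterD_card_lt h
      rw [pos_D hUD h]; omega

lemma pos_low_le (hUD : D ∪ U = Finset.Icc 1 (n + 1)) {v : ℕ} (hv : v ≤ n + 2)
    (hvU : v ∉ U) : pos n D U v ≤ D.card + 1 := by
  rcases low_cases hUD hv hvU with h | h | h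
  · subst h; rw [pos_zero]; omega
  · subst h; rw [pos_top]
  · have := filterD_card_lt h
    rw [pos_D hUD h]; omega

lemma pos_low_mono (hUD : D ∪ U = Finset.Icc 1 (n + 1)) {x y : ℕ}
    (hx : x ≤ n + 2) (hy : y ≤ n + 2) (hxU : x ∉ U) (hyU : y ∉ U) (hxy : x < y) :
    pos n D U x < pos n D U y := by
  rcases low_cases hUD hy hyU with h | h | h
  · omega
  · subst h
    rw [pos_top]
    rcases low_cases hUD hx hxU with h' | h' | h'
    · subst h'; rw [pos_zero]; omega
    · omega
    · have := filterD_card_lt h'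
      rw [pos_D hUD h']; omega
  · rw [pos_D hUD h]
    rcases low_cases hUD hx hxU with h' | h' | h'
    · subst h'; rw [pos_zero]; omega
    · have := mem_D_bounds hUD h; omega
    · rw [pos_D hUD h']
      have hss : D.filter (fun z => z < x) ⊂ D.filter (fun z => z < y) := by
        refine ⟨fun z hz => by
          simp only [Finset.mem_filter] at hz ⊢
          exact ⟨hz.1, by omega⟩, fun hsub => ?_⟩
        have := hsub (Finset.mem_filter.2 ⟨h', hxy⟩)
        simp at this
      have := Finset.card_lt_card hss
      omega

lemma pos_U_anti (hUD : D ∪ U = Finset.Icc 1 (n + 1)) (hdisj : Disjoint D U)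
    {x y : ℕ} (hx : x ∈ U) (hy : y ∈ U) (hxy : x < y) :
    pos n D U y < pos n D U x := by
  rw [pos_U hUD hdisj hx, pos_U hUD hdisj hy]
  have hss : U.filter (fun z => y < z) ⊂ U.filter (fun z => x < z) := by
    refine ⟨fun z hz => by
      simp only [Finset.mem_filter] at hz ⊢
      exact ⟨hz.1, by omega⟩, fun hsub => ?_⟩
    have := hsub (Finset.mem_filter.2 ⟨hy, hxy⟩)
    simp at this
  have := Finset.card_lt_card hss
  omega

lemma pos_lt_key (hUD : D ∪ U = Finset.Icc 1 (n + 1)) (hdisj : Disjoint D U)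
    {x y : ℕ} (hx : x ≤ n + 2) (hy : y ≤ n + 2) :
    pos n D U x < pos n D U y ↔ key n U x < key n U y := by
  by_cases hxU : x ∈ U <;> by_cases hyU : y ∈ U <;>
    simp only [key, if_pos, if_neg, hxU, hyU, if_true, if_false]
  · -- both in U
    have hbx := mem_U_bounds hUD hxU
    have hby := mem_U_bounds hUD hyU
    rcases lt_trichotomy x y with h | h | h
    · have := pos_U_anti hUD hdisj hxU hyU h; omega
    · subst h; omega
    · have := pos_U_anti hUD hdisj hyU hxU h; omega
  · -- x ∈ U, y ∉ U : both sides false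
    have h1 := pos_low_le hUD hy hyU
    have h2 : D.card + 2 ≤ pos n D U x := by rw [pos_U hUD hdisj hxU]; omega
    have hbx := mem_U_bounds hUD hxU
    omega
  · -- x ∉ U, y ∈ U : both sides true
    have h1 := pos_low_le hUD hx hxU
    have h2 : D.card + 2 ≤ pos n D U y := by rw [pos_U hUD hdisj hyU]; omega
    have hby := mem_U_bounds hUD hyU
    omega
  · -- both low
    rcases lt_trichotomy x y with h | h | h
    · have := pos_low_mono hUD hx hy hxU hyU h; omega
    · subst h; omega
    · have := pos_low_mono hUD hy hx hyU hxU h; omega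

lemma pos_inj (hUD : D ∪ U = Finset.Icc 1 (n + 1)) (hdisj : Disjoint D U)
    {x y : ℕ} (hx : x ≤ n + 2) (hy : y ≤ n + 2)
    (h : pos n D U x = pos n D U y) : x = y := by
  by_contra hne
  rcases lt_trichotomy x y with hlt | hlt | hlt
  · rcases (pos_lt_key hUD hdisj hx hy) with ⟨h1, h2⟩
    rcases (pos_lt_key hUD hdisj hy hx) with ⟨h3, h4⟩
    by_cases hxU : x ∈ U <;> by_cases hyU : y ∈ U <;>
      simp only [key, if_pos, if_neg, hxU, hyU, if_true, if_false] at h2 h4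
    · have hbx := mem_U_bounds hUD hxU
      have hby := mem_U_bounds hUD hyU
      omega
    · have hbx := mem_U_bounds hUD hxU
      omega
    · have hby := mem_U_bounds hUD hyU
      omega
    · omega
  · exact hne hlt
  · rcases (pos_lt_key hUD hdisj hx hy) with ⟨h1, h2⟩
    rcases (pos_lt_key hUD hdisj hy hx) with ⟨h3, h4⟩
    by_cases hxU : x ∈ U <;> by_cases hyU : y ∈ U <;>
      simp only [key, if_pos, if_neg, hxU, hyU, if_true, if_false] at h2 h4
    · have hbx := mem_U_bounds hUD hxU
      have hby := mem_U_bounds hUD hyU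
      omega
    · have hbx := mem_U_bounds hUD hxU
      omega
    · have hby := mem_U_bounds hUD hyU
      omega
    · omega

lemma btw_key (hUD : D ∪ U = Finset.Icc 1 (n + 1)) (hdisj : Disjoint D U)
    {x y z : ℕ} (hx : x ≤ n + 2) (hy : y ≤ n + 2) (hz : z ≤ n + 2) :
    btwn (pos n D U x) (pos n D U y) (pos n D U z) ↔
      btwn (key n U x) (key n U y) (key n U z) := by
  simp only [btwn, pos_lt_key hUD hdisj hx hy, pos_lt_key hUD hdisj hy hz,
    pos_lt_key hUD hdisj hz hx]

lemma pos_surj (hUD : D ∪ U = Finset.Icc 1 (n + 1)) (hdisj : Disjoint D U)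
    {k : ℕ} (hk : k < n + 3) : ∃ v, v ≤ n + 2 ∧ pos n D U v = k := by
  have hsub : (Finset.range (n + 3)).image (pos n D U) ⊆ Finset.range (n + 3) := by
    intro x hx
    rcases Finset.mem_image.1 hx with ⟨v, hv, rfl⟩
    exact Finset.mem_range.2 (pos_lt hUD hdisj (by
      have := Finset.mem_range.1 hv; omega))
  have hcard : ((Finset.range (n + 3)).image (pos n D U)).card = n + 3 := by
    rw [Finset.card_image_of_injOn, Finset.card_range]
    intro x hx y hy hxy
    exact pos_inj hUD hdisj (by have := Finset.mem_range.1 hx; omega)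
      (by have := Finset.mem_range.1 hy; omega) hxy
  have heq : (Finset.range (n + 3)).image (pos n D U) = Finset.range (n + 3) :=
    Finset.eq_of_subset_of_card_le hsub (by rw [hcard, Finset.card_range])
  have : k ∈ (Finset.range (n + 3)).image (pos n D U) := by
    rw [heq]; exact Finset.mem_range.2 hk
  rcases Finset.mem_image.1 this with ⟨v, hv, hpv⟩
  exact ⟨v, by have := Finset.mem_range.1 hv; omega, hpv⟩

lemma relpos_spec (hUD : D ∪ U = Finset.Icc 1 (n + 1)) (hdisj : Disjoint D U)
    {a b : ℕ} (ha : a ≤ n + 2) (hb : b ≤ n + 2) :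
    (pos n D U a ≤ pos n D U b ∧ relpos n D U a b = pos n D U b - pos n D U a) ∨
    (pos n D U b < pos n D U a ∧
      relpos n D U a b = pos n D U b + (n + 3) - pos n D U a) := by
  have h1 := pos_lt hUD hdisj ha
  have h2 := pos_lt hUD hdisj hb
  unfold relpos
  rcases le_or_gt (pos n D U a) (pos n D U b) with h | h
  · left
    refine ⟨h, ?_⟩
    have he : pos n D U b + (n + 3) - pos n D U a
        = (pos n D U b - pos n D U a) + (n + 3) := by omega
    rw [he, Nat.add_mod_right, Nat.mod_eq_of_lt (by omega)]
  · right
    refine ⟨h, ?_⟩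
    rw [Nat.mod_eq_of_lt (by omega)]

lemma SB_iff (hUD : D ∪ U = Finset.Icc 1 (n + 1)) (hdisj : Disjoint D U)
    {a b v : ℕ} (ha : a ≤ n + 2) (hb : b ≤ n + 2) (hv : v ≤ n + 2) :
    StrictBetween n D U a b v ↔ btwn (pos n D U a) (pos n D U v) (pos n D U b) := by
  have h1 := pos_lt hUD hdisj ha
  have h2 := pos_lt hUD hdisj hb
  have h3 := pos_lt hUD hdisj hv
  rcases relpos_spec hUD hdisj ha hv with ⟨hle, he⟩ | ⟨hle, he⟩ <;>
    rcases relpos_spec hUD hdisj ha hb with ⟨hle', he'⟩ | ⟨hle', he'⟩ <;>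
      (unfold StrictBetween; rw [he, he']; simp only [btwn]; constructor)
  · rintro ⟨_, u1, u2⟩; omega
  · rintro h; exact ⟨hv, by omega, by omega⟩
  · rintro ⟨_, u1, u2⟩; omega
  · rintro h; exact ⟨hv, by omega, by omega⟩
  · rintro ⟨_, u1, u2⟩; omega
  · rintro h; exact ⟨hv, by omega, by omega⟩
  · rintro ⟨_, u1, u2⟩; omega
  · rintro h; exact ⟨hv, by omega, by omega⟩

end Aux


section Aux2

variable {n : ℕ} {D U : Finset ℕ} {T : Finset (ℕ × ℕ)}

/-- sorted edge of the triangulation or boundary -/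
def Edg (n : ℕ) (D U : Finset ℕ) (T : Finset (ℕ × ℕ)) (a b : ℕ) : Prop :=
  a < b ∧ b ≤ n + 2 ∧ EdgeOf n D U T a b

/-- unordered edge -/
def EdgU (n : ℕ) (D U : Finset ℕ) (T : Finset (ℕ × ℕ)) (a b : ℕ) : Prop :=
  Edg n D U T a b ∨ Edg n D U T b a

lemma EdgU_symm {a b : ℕ} (h : EdgU n D U T a b) : EdgU n D U T b a := h.symm

lemma EdgU_ne {a b : ℕ} (h : EdgU n D U T a b) : a ≠ b := by
  rcases h with ⟨h, _⟩ | ⟨h, _⟩ <;> omega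

lemma EdgU_le {a b : ℕ} (h : EdgU n D U T a b) : a ≤ n + 2 ∧ b ≤ n + 2 := by
  rcases h with ⟨h1, h2, _⟩ | ⟨h1, h2, _⟩ <;> omega

lemma mem_T_Edg (hT : IsTriangulation n D U T) {a b : ℕ} (h : (a, b) ∈ T) :
    Edg n D U T a b := by
  obtain ⟨⟨h1, h2⟩, _⟩ := hT.1 _ h
  exact ⟨h1, h2, Or.inl h⟩

lemma ne_of_pos_ne (hUD : D ∪ U = Finset.Icc 1 (n + 1)) (hdisj : Disjoint D U)
    {x y : ℕ} (hx : x ≤ n + 2) (hy : y ≤ n + 2) (h : x ≠ y) :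
    pos n D U x ≠ pos n D U y := fun he => h (pos_inj hUD hdisj hx hy he)

lemma btwn_kill (hUD : D ∪ U = Finset.Icc 1 (n + 1)) (hdisj : Disjoint D U)
    {a b v : ℕ} (ha : a ≤ n + 2) (hb : b ≤ n + 2) (hv : v ≤ n + 2)
    (h1 : relpos n D U a b = 1) : ¬ btwn (pos n D U a) (pos n D U v) (pos n D U b) := by
  have p1 := pos_lt hUD hdisj ha
  have p2 := pos_lt hUD hdisj hb
  have p3 := pos_lt hUD hdisj hv
  rcases relpos_spec hUD hdisj ha hb with ⟨u1, u2⟩ | ⟨u1, u2⟩ <;>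
    · simp only [btwn]; omega

lemma noCross2 (hUD : D ∪ U = Finset.Icc 1 (n + 1)) (hdisj : Disjoint D U)
    (hT : IsTriangulation n D U T) {a b c d : ℕ}
    (he : Edg n D U T a b) (he' : Edg n D U T c d)
    (hpat : (btwn (pos n D U a) (pos n D U c) (pos n D U b) ∧
             btwn (pos n D U b) (pos n D U d) (pos n D U a)) ∨
            (btwn (pos n D U a) (pos n D U d) (pos n D U b) ∧
             btwn (pos n D U b) (pos n D U c) (pos n D U a))) : False := by
  obtain ⟨hab, hble, hE⟩ := he
  obtain ⟨hcd, hdle, hE'⟩ := he'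
  have ha : a ≤ n + 2 := by omega
  have hc : c ≤ n + 2 := by omega
  have pa := pos_lt hUD hdisj ha
  have pb := pos_lt hUD hdisj hble
  have pc := pos_lt hUD hdisj hc
  have pd := pos_lt hUD hdisj hdle
  have pab : pos n D U a ≠ pos n D U b := ne_of_pos_ne hUD hdisj ha hble (by omega)
  have pcd : pos n D U c ≠ pos n D U d := ne_of_pos_ne hUD hdisj hc hdle (by omega)
  rcases hE with hm | hbd
  · rcases hE' with hm' | hbd'
    · -- both in T
      refine hT.2.1 (a, b) hm (c, d) hm' ?_
      have nac : a ≠ c := by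
        intro h; subst h; simp only [btwn] at hpat; omega
      have nad : a ≠ d := by
        intro h; subst h; simp only [btwn] at hpat; omega
      have nbc : b ≠ c := by
        intro h; subst h; simp only [btwn] at hpat; omega
      have nbd : b ≠ d := by
        intro h; subst h; simp only [btwn] at hpat; omega
      refine ⟨by omega, by omega, nac, nad, nbc, nbd, ?_⟩
      rcases hpat with ⟨h1, h2⟩ | ⟨h1, h2⟩
      · exact Or.inl ⟨(SB_iff hUD hdisj ha hble hc).2 h1, (SB_iff hUD hdisj hble ha hdle).2 h2⟩
      · exact Or.inr ⟨(SB_iff hUD hdisj ha hble hdle).2 h1, (SB_iff hUD hdisj hble ha hc).2 h2⟩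
    · -- (c,d) boundary
      have hsep : (btwn (pos n D U c) (pos n D U a) (pos n D U d) ∧
                   btwn (pos n D U d) (pos n D U b) (pos n D U c)) ∨
                  (btwn (pos n D U d) (pos n D U a) (pos n D U c) ∧
                   btwn (pos n D U c) (pos n D U b) (pos n D U d)) := by
        simp only [btwn] at hpat ⊢; omega
      rcases hbd'.2 with h1 | h1
      · rcases hsep with ⟨hx, _⟩ | ⟨_, hx⟩ <;>
          exact btwn_kill hUD hdisj hc hdle (by omega) h1 hx
      · rcases hsep with ⟨_, hx⟩ | ⟨hx, _⟩ <;>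
          exact btwn_kill hUD hdisj hdle hc (by omega) h1 hx
  · -- (a,b) boundary
    rcases hbd.2 with h1 | h1
    · rcases hpat with ⟨hx, _⟩ | ⟨hx, _⟩ <;>
        exact btwn_kill hUD hdisj ha hble (by omega) h1 hx
    · rcases hpat with ⟨_, hx⟩ | ⟨_, hx⟩ <;>
        exact btwn_kill hUD hdisj hble ha (by omega) h1 hx

lemma noCrossU (hUD : D ∪ U = Finset.Icc 1 (n + 1)) (hdisj : Disjoint D U)
    (hT : IsTriangulation n D U T) {a b c d : ℕ}
    (he : EdgU n D U T a b) (he' : EdgU n D U T c d)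
    (h1 : btwn (pos n D U a) (pos n D U c) (pos n D U b))
    (h2 : btwn (pos n D U b) (pos n D U d) (pos n D U a)) : False := by
  rcases he with he | he <;> rcases he' with he' | he'
  · exact noCross2 hUD hdisj hT he he' (Or.inl ⟨h1, h2⟩)
  · exact noCross2 hUD hdisj hT he he' (Or.inr ⟨h1, h2⟩)
  · exact noCross2 hUD hdisj hT he he' (Or.inr ⟨h2, h1⟩)
  · exact noCross2 hUD hdisj hT he he' (Or.inl ⟨h2, h1⟩)

lemma maxT (hUD : D ∪ U = Finset.Icc 1 (n + 1)) (hdisj : Disjoint D U)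
    (hT : IsTriangulation n D U T) {a b : ℕ} (hab : a < b) (hb : b ≤ n + 2)
    (h1 : relpos n D U a b ≠ 1) (h2 : relpos n D U b a ≠ 1) (hnT : (a, b) ∉ T) :
    ∃ c d, (c, d) ∈ T ∧ c ≤ n + 2 ∧ d ≤ n + 2 ∧
      ((btwn (pos n D U a) (pos n D U c) (pos n D U b) ∧
        btwn (pos n D U b) (pos n D U d) (pos n D U a)) ∨
       (btwn (pos n D U a) (pos n D U d) (pos n D U b) ∧
        btwn (pos n D U b) (pos n D U c) (pos n D U a))) := by
  have hint : IsInternalDiag n D U (a, b) := by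
    refine ⟨⟨hab, hb⟩, ?_⟩
    rintro ⟨_, h | h⟩
    · exact h1 h
    · exact h2 h
  obtain ⟨δ', hδ'T, hcross⟩ := hT.2.2 (a, b) hint hnT
  obtain ⟨⟨hcd, hdle⟩, _⟩ := hT.1 _ hδ'T
  obtain ⟨c, d⟩ := δ'
  simp only at hcd hdle ⊢
  obtain ⟨_, _, _, _, _, _, hp⟩ := hcross
  have ha : a ≤ n + 2 := by omega
  have hc : c ≤ n + 2 := by omega
  refine ⟨c, d, hδ'T, hc, hdle, ?_⟩
  rcases hp with ⟨u1, u2⟩ | ⟨u1, u2⟩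
  · exact Or.inl ⟨(SB_iff hUD hdisj ha hb hc).1 u1, (SB_iff hUD hdisj hb ha hdle).1 u2⟩
  · exact Or.inr ⟨(SB_iff hUD hdisj ha hb hdle).1 u1, (SB_iff hUD hdisj hb ha hc).1 u2⟩

end Aux2


section Aux3

variable {n : ℕ} {D U : Finset ℕ} {T : Finset (ℕ × ℕ)}

lemma ear (hUD : D ∪ U = Finset.Icc 1 (n + 1)) (hdisj : Disjoint D U)
    (hT : IsTriangulation n D U T) {a b : ℕ} (ha : a ≤ n + 2) (hb : b ≤ n + 2)
    (he : EdgU n D U T a b) (h2 : 2 ≤ relpos n D U b a) :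
    ∃ c, c ≤ n + 2 ∧ btwn (pos n D U b) (pos n D U c) (pos n D U a) ∧
      EdgU n D U T a c ∧ EdgU n D U T c b := by
  have pa := pos_lt hUD hdisj ha
  have pb := pos_lt hUD hdisj hb
  have pab : pos n D U a ≠ pos n D U b :=
    ne_of_pos_ne hUD hdisj ha hb (EdgU_ne he)
  -- v0 : predecessor of a, lies strictly inside arc (b → a)
  obtain ⟨v0, hv0le, hv0⟩ := pos_surj hUD hdisj
    (k := if pos n D U a = 0 then n + 2 else pos n D U a - 1) (by split_ifs <;> omega)
  have pv0 := pos_lt hUD hdisj hv0le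
  have hrba := relpos_spec hUD hdisj hb ha
  have hv0b : btwn (pos n D U b) (pos n D U v0) (pos n D U a) := by
    rcases hrba with ⟨u1, u2⟩ | ⟨u1, u2⟩ <;> (split_ifs at hv0 <;> (simp only [btwn]; omega))
  have hrv0 : relpos n D U v0 a = 1 := by
    rcases relpos_spec hUD hdisj hv0le ha with ⟨u1, u2⟩ | ⟨u1, u2⟩ <;>
      (split_ifs at hv0 <;> omega)
  have hEav0 : EdgU n D U T a v0 := by
    rcases lt_trichotomy a v0 with hlt | heq | hlt
    · exact Or.inl ⟨hlt, hv0le, Or.inr ⟨⟨hlt, hv0le⟩, Or.inr hrv0⟩⟩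
    · exfalso; subst heq
      rcases relpos_spec hUD hdisj hv0le hv0le with ⟨u1, u2⟩ | ⟨u1, u2⟩ <;> omega
    · exact Or.inr ⟨hlt, ha, Or.inr ⟨⟨hlt, ha⟩, Or.inl hrv0⟩⟩
  set S := (Finset.range (n + 3)).filter
    (fun c => btwn (pos n D U b) (pos n D U c) (pos n D U a) ∧ EdgU n D U T a c) with hSdef
  have hv0S : v0 ∈ S := by
    simp only [hSdef, Finset.mem_filter, Finset.mem_range]
    exact ⟨by omega, hv0b, hEav0⟩
  obtain ⟨c, hcS, hmin⟩ := S.exists_min_image (fun c => relpos n D U b c) ⟨v0, hv0S⟩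
  simp only [hSdef, Finset.mem_filter, Finset.mem_range] at hcS
  obtain ⟨hcr, hcb, hcE⟩ := hcS
  have hcle : c ≤ n + 2 := by omega
  have pc := pos_lt hUD hdisj hcle
  refine ⟨c, hcle, hcb, hcE, ?_⟩
  have hrbc := relpos_spec hUD hdisj hb hcle
  have hrcb := relpos_spec hUD hdisj hcle hb
  by_cases h1 : relpos n D U b c = 1
  · rcases lt_trichotomy c b with hlt | heq | hlt
    · exact Or.inl ⟨hlt, hb, Or.inr ⟨⟨hlt, hb⟩, Or.inr h1⟩⟩
    · exfalso; subst heq; simp only [btwn] at hcb; omega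
    · exact Or.inr ⟨hlt, hcle, Or.inr ⟨⟨hlt, hcle⟩, Or.inl h1⟩⟩
  · -- the pair {c,b} must be in T
    have hne1 : relpos n D U c b ≠ 1 := by
      rcases hrbc with ⟨u1, u2⟩ | ⟨u1, u2⟩ <;> rcases hrcb with ⟨w1, w2⟩ | ⟨w1, w2⟩ <;>
        rcases hrba with ⟨z1, z2⟩ | ⟨z1, z2⟩ <;> (simp only [btwn] at hcb; omega)
    -- common contradiction derivation
    have hcontra : ∀ w w', EdgU n D U T w w' → w ≤ n + 2 → w' ≤ n + 2 →
        btwn (pos n D U b) (pos n D U w) (pos n D U c) →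
        btwn (pos n D U c) (pos n D U w') (pos n D U b) → False := by
      intro w w' hww' hwle hw'le hw hw'
      have pw := pos_lt hUD hdisj hwle
      have pw' := pos_lt hUD hdisj hw'le
      have hwa : btwn (pos n D U b) (pos n D U w) (pos n D U a) := by
        simp only [btwn] at hcb hw ⊢; omega
      have hwS : EdgU n D U T a w → False := by
        intro hEaw
        have hwS' : w ∈ S := by
          simp only [hSdef, Finset.mem_filter, Finset.mem_range]
          exact ⟨by omega, hwa, hEaw⟩
        have := hmin w hwS'
        rcases hrbc with ⟨u1, u2⟩ | ⟨u1, u2⟩ <;>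
          rcases relpos_spec hUD hdisj hb hwle with ⟨w1, w2⟩ | ⟨w1, w2⟩ <;>
            (simp only [btwn] at hcb hw; omega)
      have hdec : btwn (pos n D U c) (pos n D U w') (pos n D U a) ∨
          pos n D U w' = pos n D U a ∨
          btwn (pos n D U a) (pos n D U w') (pos n D U b) := by
        simp only [btwn] at hcb hw' ⊢; omega
      rcases hdec with hx | hx | hx
      · -- w' in arc(c→a) : {w,w'} crosses edge {a,c}
        have hAWC : btwn (pos n D U a) (pos n D U w) (pos n D U c) := by
          simp only [btwn] at hcb hw ⊢; omega
        exact noCrossU hUD hdisj hT hcE hww' hAWC hx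
      · -- w' = a
        have : w' = a := pos_inj hUD hdisj hw'le ha hx
        subst this
        exact hwS (EdgU_symm hww')
      · -- w' in arc(a→b) : {w,w'} crosses edge {a,b}
        exact noCrossU hUD hdisj hT he (EdgU_symm hww') hx hwa
    rcases lt_trichotomy c b with hlt | heq | hlt
    · by_cases hmem : (c, b) ∈ T
      · exact Or.inl ⟨hlt, hb, Or.inl hmem⟩
      · exfalso
        obtain ⟨x, y, hxyT, hxle, hyle, hpat⟩ := maxT hUD hdisj hT hlt hb hne1 h1 hmem
        have hExy : EdgU n D U T x y := Or.inl (mem_T_Edg hT hxyT)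
        rcases hpat with ⟨u1, u2⟩ | ⟨u1, u2⟩
        · exact hcontra y x (EdgU_symm hExy) hyle hxle u2 u1
        · exact hcontra x y hExy hxle hyle u2 u1
    · exfalso; subst heq; simp only [btwn] at hcb; omega
    · by_cases hmem : (b, c) ∈ T
      · exact Or.inr ⟨hlt, hcle, Or.inl hmem⟩
      · exfalso
        obtain ⟨x, y, hxyT, hxle, hyle, hpat⟩ := maxT hUD hdisj hT hlt hcle h1 hne1 hmem
        have hExy : EdgU n D U T x y := Or.inl (mem_T_Edg hT hxyT)
        rcases hpat with ⟨u1, u2⟩ | ⟨u1, u2⟩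
        · exact hcontra x y hExy hxle hyle u1 u2
        · exact hcontra y x (EdgU_symm hExy) hyle hxle u1 u2

lemma apexUnique (hUD : D ∪ U = Finset.Icc 1 (n + 1)) (hdisj : Disjoint D U)
    (hT : IsTriangulation n D U T) {a b c₁ c₂ : ℕ}
    (ha : a ≤ n + 2) (hb : b ≤ n + 2) (hc1 : c₁ ≤ n + 2) (hc2 : c₂ ≤ n + 2)
    (h1 : btwn (pos n D U b) (pos n D U c₁) (pos n D U a))
    (hE1 : EdgU n D U T a c₁) (hE1' : EdgU n D U T c₁ b)
    (h2 : btwn (pos n D U b) (pos n D U c₂) (pos n D U a))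
    (hE2 : EdgU n D U T a c₂) (hE2' : EdgU n D U T c₂ b) : c₁ = c₂ := by
  have pa := pos_lt hUD hdisj ha
  have pb := pos_lt hUD hdisj hb
  have pc1 := pos_lt hUD hdisj hc1
  have pc2 := pos_lt hUD hdisj hc2
  have core : ∀ x y, x ≤ n + 2 → y ≤ n + 2 →
      btwn (pos n D U b) (pos n D U x) (pos n D U a) →
      btwn (pos n D U b) (pos n D U y) (pos n D U a) →
      EdgU n D U T a x → EdgU n D U T y b →
      relpos n D U b x < relpos n D U b y → False := by
    intro x y hx hy hbx hby hEax hEyb hlt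
    have px := pos_lt hUD hdisj hx
    have py := pos_lt hUD hdisj hy
    have hrx := relpos_spec hUD hdisj hb hx
    have hry := relpos_spec hUD hdisj hb hy
    have hXYA : btwn (pos n D U x) (pos n D U y) (pos n D U a) := by
      rcases hrx with ⟨u1, u2⟩ | ⟨u1, u2⟩ <;> rcases hry with ⟨w1, w2⟩ | ⟨w1, w2⟩ <;>
        (simp only [btwn] at hbx hby ⊢; omega)
    have hABX : btwn (pos n D U a) (pos n D U b) (pos n D U x) := by
      simp only [btwn] at hbx ⊢; omega
    exact noCrossU hUD hdisj hT hEax (EdgU_symm hEyb) hABX hXYA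
  rcases lt_trichotomy (relpos n D U b c₁) (relpos n D U b c₂) with hlt | heq | hlt
  · exact absurd (core c₁ c₂ hc1 hc2 h1 h2 hE1 hE2' hlt) (by simp)
  · -- equal relpos ⇒ equal pos ⇒ equal
    have hrx := relpos_spec hUD hdisj hb hc1
    have hry := relpos_spec hUD hdisj hb hc2
    apply pos_inj hUD hdisj hc1 hc2
    rcases hrx with ⟨u1, u2⟩ | ⟨u1, u2⟩ <;> rcases hry with ⟨w1, w2⟩ | ⟨w1, w2⟩ <;> omega
  · exact absurd (core c₂ c₁ hc2 hc1 h2 h1 hE2 hE1' hlt) (by simp)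

end Aux3


section Aux4

variable {n : ℕ} {D U : Finset ℕ} {T : Finset (ℕ × ℕ)}

lemma EdgU_to_EdgeOf {a b : ℕ} (h : EdgU n D U T a b) (hab : a < b) :
    EdgeOf n D U T a b := by
  rcases h with ⟨_, _, h⟩ | ⟨h', _, _⟩
  · exact h
  · omega

lemma triWith_of {a b c : ℕ} (hab : a < b) (hble : b ≤ n + 2) (hcle : c ≤ n + 2)
    (hna : c ≠ a) (hnb : c ≠ b) (hEab : EdgU n D U T a b)
    (hEac : EdgU n D U T a c) (hEcb : EdgU n D U T c b) :
    TriWith n D U T (a, b) c := by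
  unfold TriWith
  simp only
  split_ifs with h1 h2
  · exact ⟨h1, hab, hble, EdgU_to_EdgeOf (EdgU_symm hEac) h1, EdgU_to_EdgeOf hEab hab,
      EdgU_to_EdgeOf hEcb (by omega)⟩
  · exact ⟨by omega, h2, hble, EdgU_to_EdgeOf hEac (by omega), EdgU_to_EdgeOf hEcb h2,
      EdgU_to_EdgeOf hEab hab⟩
  · exact ⟨hab, by omega, hcle, EdgU_to_EdgeOf hEab hab,
      EdgU_to_EdgeOf (EdgU_symm hEcb) (by omega), EdgU_to_EdgeOf hEac (by omega)⟩

lemma triWith_extract {a b c : ℕ} (hab : a < b) (hble : b ≤ n + 2)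
    (h : TriWith n D U T (a, b) c) :
    c ≤ n + 2 ∧ EdgU n D U T a c ∧ EdgU n D U T c b := by
  unfold TriWith at h
  simp only at h
  split_ifs at h with h1 h2
  · obtain ⟨u1, u2, u3, e1, e2, e3⟩ := h
    exact ⟨by omega, Or.inr ⟨u1, by omega, e1⟩, Or.inl ⟨by omega, hble, e3⟩⟩
  · obtain ⟨u1, u2, u3, e1, e2, e3⟩ := h
    exact ⟨by omega, Or.inl ⟨u1, by omega, e1⟩, Or.inl ⟨u2, hble, e2⟩⟩
  · obtain ⟨u1, u2, u3, e1, e2, e3⟩ := h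
    exact ⟨u3, Or.inl ⟨by omega, u3, e3⟩, Or.inr ⟨u2, u3, e2⟩⟩

lemma spineTgt_eq (hUD : D ∪ U = Finset.Icc 1 (n + 1)) (hdisj : Disjoint D U)
    (hT : IsTriangulation n D U T) {a b c : ℕ} (hmem : (a, b) ∈ T) (hcle : c ≤ n + 2)
    (hcb : btwn (pos n D U b) (pos n D U c) (pos n D U a))
    (hEac : EdgU n D U T a c) (hEcb : EdgU n D U T c b) :
    spineTgt n D U T (a, b) = midOf a b c := by
  obtain ⟨⟨hab, hble⟩, _⟩ := hT.1 _ hmem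
  have ha : a ≤ n + 2 := by omega
  have hna : c ≠ a := by
    intro h; subst h; simp only [btwn] at hcb; omega
  have hnb : c ≠ b := by
    intro h; subst h; simp only [btwn] at hcb; omega
  have hSB : StrictBetween n D U b a c := (SB_iff hUD hdisj hble ha hcle).2 hcb
  have htw : TriWith n D U T (a, b) c :=
    triWith_of hab hble hcle hna hnb (Or.inl (mem_T_Edg hT hmem)) hEac hEcb
  have hex : ∃ c', StrictBetween n D U (a, b).2 (a, b).1 c' ∧ TriWith n D U T (a, b) c' :=
    ⟨c, hSB, htw⟩
  unfold spineTgt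
  rw [dif_pos hex]
  obtain ⟨hsb', htw'⟩ := hex.choose_spec
  have hle' : hex.choose ≤ n + 2 := hsb'.1
  have hbtw' : btwn (pos n D U b) (pos n D U hex.choose) (pos n D U a) :=
    (SB_iff hUD hdisj hble ha hle').1 hsb'
  obtain ⟨_, hE1, hE2⟩ := triWith_extract hab hble htw'
  have heq : hex.choose = c :=
    apexUnique hUD hdisj hT ha hble hle' hcle hbtw' hE1 hE2 hcb hEac hEcb
  rw [heq]

lemma spineSrc_eq (hUD : D ∪ U = Finset.Icc 1 (n + 1)) (hdisj : Disjoint D U)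
    (hT : IsTriangulation n D U T) {a b c : ℕ} (hmem : (a, b) ∈ T) (hcle : c ≤ n + 2)
    (hcb : btwn (pos n D U a) (pos n D U c) (pos n D U b))
    (hEac : EdgU n D U T a c) (hEcb : EdgU n D U T c b) :
    spineSrc n D U T (a, b) = midOf a b c := by
  obtain ⟨⟨hab, hble⟩, _⟩ := hT.1 _ hmem
  have ha : a ≤ n + 2 := by omega
  have hna : c ≠ a := by
    intro h; subst h; simp only [btwn] at hcb; omega
  have hnb : c ≠ b := by
    intro h; subst h; simp only [btwn] at hcb; omega
  have hSB : StrictBetween n D U a b c := (SB_iff hUD hdisj ha hble hcle).2 hcb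
  have htw : TriWith n D U T (a, b) c :=
    triWith_of hab hble hcle hna hnb (Or.inl (mem_T_Edg hT hmem)) hEac hEcb
  have hex : ∃ c', StrictBetween n D U (a, b).1 (a, b).2 c' ∧ TriWith n D U T (a, b) c' :=
    ⟨c, hSB, htw⟩
  unfold spineSrc
  rw [dif_pos hex]
  obtain ⟨hsb', htw'⟩ := hex.choose_spec
  have hle' : hex.choose ≤ n + 2 := hsb'.1
  have hbtw' : btwn (pos n D U a) (pos n D U hex.choose) (pos n D U b) :=
    (SB_iff hUD hdisj ha hble hle').1 hsb'
  obtain ⟨_, hE1, hE2⟩ := triWith_extract hab hble htw'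
  have heq : hex.choose = c :=
    apexUnique hUD hdisj hT (a := b) (b := a) hble ha hle' hcle hbtw'
      (EdgU_symm hE2) (EdgU_symm hE1) hcb (EdgU_symm hEcb) (EdgU_symm hEac)
  rw [heq]

lemma key_spec (hUD : D ∪ U = Finset.Icc 1 (n + 1)) {x : ℕ} (hx : x ≤ n + 2) :
    (key n U x = 2 * (n + 2) - x ∧ 1 ≤ x ∧ x ≤ n + 1 ∧ x ∈ U) ∨
    (key n U x = x ∧ x ∉ U) := by
  by_cases h : x ∈ U
  · have := mem_U_bounds hUD h
    exact Or.inl ⟨by simp [key, h], this.1, this.2, h⟩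
  · exact Or.inr ⟨by simp [key, h], h⟩

lemma EXA (hUD : D ∪ U = Finset.Icc 1 (n + 1)) (hdisj : Disjoint D U)
    {a b c v : ℕ} (ha : a ≤ n + 2) (hb : b ≤ n + 2) (hc : c ≤ n + 2) (hv : v ≤ n + 2)
    (h1 : a < v) (h2 : v < b) (h3 : c < b) (h4 : c < v)
    (hbca : btwn (pos n D U b) (pos n D U c) (pos n D U a))
    (hbva : btwn (pos n D U b) (pos n D U v) (pos n D U a)) :
    ¬ btwn (pos n D U c) (pos n D U v) (pos n D U a) := by
  intro hcv
  rw [btw_key hUD hdisj hb hc ha] at hbca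
  rw [btw_key hUD hdisj hb hv ha] at hbva
  rw [btw_key hUD hdisj hc hv ha] at hcv
  rcases key_spec hUD ha with ⟨e1, f1, g1, _⟩ | ⟨e1, _⟩ <;>
    rcases key_spec hUD hb with ⟨e2, f2, g2, _⟩ | ⟨e2, _⟩ <;>
      rcases key_spec hUD hc with ⟨e3, f3, g3, _⟩ | ⟨e3, _⟩ <;>
        rcases key_spec hUD hv with ⟨e4, f4, g4, _⟩ | ⟨e4, _⟩ <;>
          (simp only [btwn] at hbca hbva hcv; omega)

lemma EXB (hUD : D ∪ U = Finset.Icc 1 (n + 1)) (hdisj : Disjoint D U)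
    {a b c v : ℕ} (ha : a ≤ n + 2) (hb : b ≤ n + 2) (hc : c ≤ n + 2) (hv : v ≤ n + 2)
    (h1 : a < v) (h2 : v < c) (h3 : v < b)
    (hbca : btwn (pos n D U b) (pos n D U c) (pos n D U a))
    (hbva : btwn (pos n D U b) (pos n D U v) (pos n D U a)) :
    ¬ btwn (pos n D U b) (pos n D U v) (pos n D U c) := by
  intro hcv
  rw [btw_key hUD hdisj hb hc ha] at hbca
  rw [btw_key hUD hdisj hb hv ha] at hbva
  rw [btw_key hUD hdisj hb hv hc] at hcv
  rcases key_spec hUD ha with ⟨e1, f1, g1, _⟩ | ⟨e1, _⟩ <;>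
    rcases key_spec hUD hb with ⟨e2, f2, g2, _⟩ | ⟨e2, _⟩ <;>
      rcases key_spec hUD hc with ⟨e3, f3, g3, _⟩ | ⟨e3, _⟩ <;>
        rcases key_spec hUD hv with ⟨e4, f4, g4, _⟩ | ⟨e4, _⟩ <;>
          (simp only [btwn] at hbca hbva hcv; omega)

end Aux4


section Aux5

variable {n : ℕ} {D U : Finset ℕ} {T : Finset (ℕ × ℕ)}

/-- `mu` is the middle vertex of the triangle below `(a,b)`. -/
def MidB (n : ℕ) (D U : Finset ℕ) (T : Finset (ℕ × ℕ)) (a b mu : ℕ) : Prop :=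
  ∃ c, c ≤ n + 2 ∧ btwn (pos n D U a) (pos n D U c) (pos n D U b) ∧
    EdgU n D U T a c ∧ EdgU n D U T c b ∧ mu = midOf a b c

/-- invariant carried along the climb -/
def ClimbInv (n : ℕ) (D U : Finset ℕ) (T : Finset (ℕ × ℕ)) (i a b : ℕ) : Prop :=
  ((btwn (pos n D U b) (pos n D U i) (pos n D U a) ∨ (i = a ∧ i ∉ U)) ∧
   (btwn (pos n D U b) (pos n D U (i + 1)) (pos n D U a) ∨ (i + 1 = b ∧ (i + 1) ∉ U))) ∨
  ((∃ mu, MidB n D U T a b mu ∧ Relation.ReflTransGen (SpineArc n D U T) i mu) ∧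
   (btwn (pos n D U b) (pos n D U (i + 1)) (pos n D U a) ∨ (i + 1 = b ∧ (i + 1) ∉ U))) ∨
  ((∃ mu, MidB n D U T a b mu ∧ Relation.ReflTransGen (SpineArc n D U T) (i + 1) mu) ∧
   (btwn (pos n D U b) (pos n D U i) (pos n D U a) ∨ (i = a ∧ i ∉ U)))

lemma climbStep (hUD : D ∪ U = Finset.Icc 1 (n + 1)) (hdisj : Disjoint D U)
    (hT : IsTriangulation n D U T) {i N : ℕ}
    {a b c a' b' mu' : ℕ}
    (he : Edg n D U T a b) (hai : a ≤ i) (hbi : i + 1 ≤ b)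
    (hge2 : 2 ≤ relpos n D U b a)
    (hcle : c ≤ n + 2)
    (hcb : btwn (pos n D U b) (pos n D U c) (pos n D U a))
    (hEac : EdgU n D U T a c) (hEcb : EdgU n D U T c b)
    (hE' : Edg n D U T a' b') (ha'i : a' ≤ i) (hb'i : i + 1 ≤ b')
    (hmeas : relpos n D U b' a' ≤ N)
    (hMidB' : MidB n D U T a' b' mu')
    (hmid : mu' = midOf a b c)
    (hEndA : i = a → i = a' ∨ mu' = i)
    (hEndB : i + 1 = b → i + 1 = b' ∨ mu' = i + 1)
    (hCmid1 : i = c → mu' = i) (hCmid2 : i + 1 = c → mu' = i + 1)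
    (hKeep : ∀ v, v ≤ n + 2 → a < v → v < b → v ≠ c → i ≤ v → v ≤ i + 1 →
      btwn (pos n D U b) (pos n D U v) (pos n D U a) →
      btwn (pos n D U b') (pos n D U v) (pos n D U a'))
    (IH : ∀ a₀ b₀, relpos n D U b₀ a₀ ≤ N → Edg n D U T a₀ b₀ → a₀ ≤ i → i + 1 ≤ b₀ →
      ClimbInv n D U T i a₀ b₀ →
      Relation.ReflTransGen (SpineArc n D U T) i (i + 1) ∨
      Relation.ReflTransGen (SpineArc n D U T) (i + 1) i)
    (hInv : ClimbInv n D U T i a b) :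
    Relation.ReflTransGen (SpineArc n D U T) i (i + 1) ∨
    Relation.ReflTransGen (SpineArc n D U T) (i + 1) i := by
  obtain ⟨hab, hble, hEof⟩ := he
  have ha : a ≤ n + 2 := by omega
  have hile : i ≤ n + 2 := by omega
  have hjle : i + 1 ≤ n + 2 := by omega
  -- transition of the unresolved-invariants
  have mkJ : mu' ≠ i + 1 →
      (btwn (pos n D U b) (pos n D U (i + 1)) (pos n D U a) ∨ (i + 1 = b ∧ (i + 1) ∉ U)) →
      (btwn (pos n D U b') (pos n D U (i + 1)) (pos n D U a') ∨ (i + 1 = b' ∧ (i + 1) ∉ U)) := by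
    intro hne h
    rcases h with hbtw | ⟨heq, hnu⟩
    · left
      have hnb : i + 1 ≠ b := by
        intro h; subst h; simp only [btwn] at hbtw; omega
      have hnc : i + 1 ≠ c := fun h => hne (hCmid2 h)
      exact hKeep (i + 1) hjle (by omega) (by omega) hnc (by omega) (by omega) hbtw
    · rcases hEndB heq with h' | h'
      · exact Or.inr ⟨h', hnu⟩
      · exact absurd h' hne
  have mkI : mu' ≠ i →
      (btwn (pos n D U b) (pos n D U i) (pos n D U a) ∨ (i = a ∧ i ∉ U)) →
      (btwn (pos n D U b') (pos n D U i) (pos n D U a') ∨ (i = a' ∧ i ∉ U)) := by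
    intro hne h
    rcases h with hbtw | ⟨heq, hnu⟩
    · left
      have hna : i ≠ a := by
        intro h; subst h; simp only [btwn] at hbtw; omega
      have hnc : i ≠ c := fun h => hne (hCmid1 h)
      exact hKeep i hile (by omega) (by omega) hnc (by omega) (by omega) hbtw
    · rcases hEndA heq with h' | h'
      · exact Or.inr ⟨h', hnu⟩
      · exact absurd h' hne
  -- the spine arc across (a,b), available whenever the triangle below exists
  have hmemT : (∃ mu, MidB n D U T a b mu) → (a, b) ∈ T := by
    rintro ⟨mu, c₀, hc₀le, hc₀b, _, _, _⟩
    rcases hEof with hm | hbd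
    · exact hm
    · exfalso
      have hbd2 := hbd.2
      simp only at hbd2
      rcases hbd2 with h1 | h1
      · exact btwn_kill hUD hdisj ha hble hc₀le h1 hc₀b
      · omega
  have harc : ∀ mu, MidB n D U T a b mu → SpineArc n D U T mu mu' := by
    intro mu hMB
    have hm := hmemT ⟨mu, hMB⟩
    obtain ⟨c₀, h1, h2, h3, h4, h5⟩ := hMB
    exact ⟨(a, b), hm, by rw [h5]; exact spineSrc_eq hUD hdisj hT hm h1 h2 h3 h4,
      by rw [hmid]; exact spineTgt_eq hUD hdisj hT hm hcle hcb hEac hEcb⟩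
  rcases hInv with ⟨hUI, hUJ⟩ | ⟨⟨mu, hMB, hRel⟩, hUJ⟩ | ⟨⟨mu, hMB, hRel⟩, hUI⟩
  · -- state 0 : neither resolved yet
    by_cases hmi : mu' = i
    · refine IH a' b' hmeas hE' ha'i hb'i (Or.inr (Or.inl ⟨⟨mu', hMidB', ?_⟩, ?_⟩))
      · subst hmi; exact Relation.ReflTransGen.refl
      · exact mkJ (by omega) hUJ
    · by_cases hmj : mu' = i + 1
      · refine IH a' b' hmeas hE' ha'i hb'i (Or.inr (Or.inr ⟨⟨mu', hMidB', ?_⟩, ?_⟩))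
        · subst hmj; exact Relation.ReflTransGen.refl
        · exact mkI (by omega) hUI
      · exact IH a' b' hmeas hE' ha'i hb'i (Or.inl ⟨mkI hmi hUI, mkJ hmj hUJ⟩)
  · -- state 1 : i already reaches the triangle below (a,b)
    have hRel' : Relation.ReflTransGen (SpineArc n D U T) i mu' := hRel.tail (harc mu hMB)
    by_cases hmj : mu' = i + 1
    · exact Or.inl (hmj ▸ hRel')
    · exact IH a' b' hmeas hE' ha'i hb'i
        (Or.inr (Or.inl ⟨⟨mu', hMidB', hRel'⟩, mkJ hmj hUJ⟩))
  · -- state 2 : i+1 already reaches the triangle below (a,b)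
    have hRel' : Relation.ReflTransGen (SpineArc n D U T) (i + 1) mu' := hRel.tail (harc mu hMB)
    by_cases hmi : mu' = i
    · exact Or.inr (hmi ▸ hRel')
    · exact IH a' b' hmeas hE' ha'i hb'i
        (Or.inr (Or.inr ⟨⟨mu', hMidB', hRel'⟩, mkI hmi hUI⟩))

end Aux5


section Aux6

variable {n : ℕ} {D U : Finset ℕ} {T : Finset (ℕ × ℕ)}

lemma pos_D_bounds (hUD : D ∪ U = Finset.Icc 1 (n + 1)) {d : ℕ} (hd : d ∈ D) :
    1 ≤ pos n D U d ∧ pos n D U d ≤ D.card := by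
  have := filterD_card_lt hd
  rw [pos_D hUD hd]; omega

lemma climb (hUD : D ∪ U = Finset.Icc 1 (n + 1)) (hdisj : Disjoint D U)
    (hT : IsTriangulation n D U T) {i : ℕ} (hi1 : 1 ≤ i) (hi2 : i ≤ n) :
    ∀ N a b, relpos n D U b a ≤ N → Edg n D U T a b → a ≤ i → i + 1 ≤ b →
      ClimbInv n D U T i a b →
      Relation.ReflTransGen (SpineArc n D U T) i (i + 1) ∨
      Relation.ReflTransGen (SpineArc n D U T) (i + 1) i := by
  intro N
  induction N with
  | zero =>
    intro a b hN he hai hbi _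
    exfalso
    have hab := he.1
    have hble := he.2.1
    have ha : a ≤ n + 2 := by omega
    have hpne : pos n D U a ≠ pos n D U b := ne_of_pos_ne hUD hdisj ha hble (by omega)
    have pa := pos_lt hUD hdisj ha
    have pb := pos_lt hUD hdisj hble
    rcases relpos_spec hUD hdisj hble ha with ⟨u1, u2⟩ | ⟨u1, u2⟩ <;> omega
  | succ N ih =>
    intro a b hN he hai hbi hInv
    have hab := he.1
    have hble := he.2.1
    have ha : a ≤ n + 2 := by omega
    have hile : i ≤ n + 2 := by omega
    have hjle : i + 1 ≤ n + 2 := by omega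
    have pa := pos_lt hUD hdisj ha
    have pb := pos_lt hUD hdisj hble
    have pii := pos_lt hUD hdisj hile
    have hcard := cardDU hUD hdisj
    have hpab : pos n D U a ≠ pos n D U b := ne_of_pos_ne hUD hdisj ha hble (by omega)
    have hrba := relpos_spec hUD hdisj hble ha
    by_cases hrel1 : relpos n D U b a = 1
    · -- top of the strip : derive a contradiction
      exfalso
      have hkill : ∀ v, v ≤ n + 2 →
          ¬ btwn (pos n D U b) (pos n D U v) (pos n D U a) := fun v hv =>
        btwn_kill hUD hdisj hble ha hv hrel1
      have hUIfix : (btwn (pos n D U b) (pos n D U i) (pos n D U a) ∨ (i = a ∧ i ∉ U)) →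
          i = a ∧ i ∈ D := by
        rintro (h | ⟨h1, h2⟩)
        · exact absurd h (hkill i hile)
        · rcases low_cases hUD hile h2 with h' | h' | h'
          · exfalso; omega
          · exfalso; omega
          · exact ⟨h1, h'⟩
      have hUJfix : (btwn (pos n D U b) (pos n D U (i + 1)) (pos n D U a) ∨
          (i + 1 = b ∧ (i + 1) ∉ U)) → i + 1 = b ∧ (i + 1) ∈ D := by
        rintro (h | ⟨h1, h2⟩)
        · exact absurd h (hkill (i + 1) hjle)
        · rcases low_cases hUD hjle h2 with h' | h' | h'
          · exfalso; omega
          · exfalso; omega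
          · exact ⟨h1, h'⟩
      -- two auxiliary contradictions
      have contraJ : i + 1 = b → (i + 1) ∈ D → False := by
        intro hjb hjD
        have hpb := pos_D_bounds hUD hjD
        rw [← hjb] at hrba hrel1
        by_cases haU : a ∈ U
        · have : D.card + 2 ≤ pos n D U a := by
            rw [pos_U hUD hdisj haU]; omega
          rcases hrba with ⟨u1, u2⟩ | ⟨u1, u2⟩ <;> omega
        · have hjU : (i + 1) ∉ U := mem_D_notU hdisj hjD
          have := pos_low_mono hUD ha hjle haU hjU (by omega)
          rcases hrba with ⟨u1, u2⟩ | ⟨u1, u2⟩ <;> omega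
      have contraI : i = a → i ∈ D → False := by
        intro hia hiD
        have hpa := pos_D_bounds hUD hiD
        rw [← hia] at hrba hrel1
        by_cases hbU : b ∈ U
        · have : D.card + 2 ≤ pos n D U b := by
            rw [pos_U hUD hdisj hbU]; omega
          rcases hrba with ⟨u1, u2⟩ | ⟨u1, u2⟩ <;> omega
        · have hiU : i ∉ U := mem_D_notU hdisj hiD
          have := pos_low_mono hUD hile hble hiU hbU (by omega)
          rcases hrba with ⟨u1, u2⟩ | ⟨u1, u2⟩ <;> omega
      rcases hInv with ⟨hUI, hUJ⟩ | ⟨_, hUJ⟩ | ⟨_, hUI⟩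
      · obtain ⟨h1, h2⟩ := hUJfix hUJ
        exact contraJ h1 h2
      · obtain ⟨h1, h2⟩ := hUJfix hUJ
        exact contraJ h1 h2
      · obtain ⟨h1, h2⟩ := hUIfix hUI
        exact contraI h1 h2
    · -- there is a triangle above (a,b)
      have hge2 : 2 ≤ relpos n D U b a := by
        rcases hrba with ⟨u1, u2⟩ | ⟨u1, u2⟩ <;> omega
      obtain ⟨c, hcle, hcb, hEac, hEcb⟩ := ear hUD hdisj hT ha hble (Or.inl he) hge2
      have pc := pos_lt hUD hdisj hcle
      have hcna : c ≠ a := by intro h; subst h; simp only [btwn] at hcb; omega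
      have hcnb : c ≠ b := by intro h; subst h; simp only [btwn] at hcb; omega
      have hrbc := relpos_spec hUD hdisj hble hcle
      have hrca := relpos_spec hUD hdisj hcle ha
      have hmeasCB : relpos n D U b c ≤ N := by
        rcases hrbc with ⟨u1, u2⟩ | ⟨u1, u2⟩ <;> rcases hrba with ⟨w1, w2⟩ | ⟨w1, w2⟩ <;>
          (simp only [btwn] at hcb; omega)
      have hmeasCA : relpos n D U c a ≤ N := by
        rcases hrca with ⟨u1, u2⟩ | ⟨u1, u2⟩ <;> rcases hrbc with ⟨v1, v2⟩ | ⟨v1, v2⟩ <;>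
          rcases hrba with ⟨w1, w2⟩ | ⟨w1, w2⟩ <;> (simp only [btwn] at hcb; omega)
      have hrot1 : btwn (pos n D U c) (pos n D U a) (pos n D U b) := by
        simp only [btwn] at hcb ⊢; omega
      have hrot2 : btwn (pos n D U a) (pos n D U b) (pos n D U c) := by
        simp only [btwn] at hcb ⊢; omega
      rcases lt_trichotomy c a with hcab | heq | hacb
      · -- c < a : next edge (c,b), new middle a
        have hEcb' : Edg n D U T c b := by
          rcases hEcb with h | h
          · exact h
          · exact absurd h.1 (by omega)
        refine climbStep (a' := c) (b' := b) (mu' := a) hUD hdisj hT he hai hbi hge2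
          hcle hcb hEac hEcb hEcb' (by omega) hbi hmeasCB
          ⟨a, ha, hrot1, EdgU_symm hEac, Or.inl he, by simp only [midOf]; split_ifs <;> omega⟩
          (by simp only [midOf]; split_ifs <;> omega)
          (fun h => Or.inr h.symm) (fun h => Or.inl h)
          (by intro h; omega) (by intro h; omega)
          ?_ ih hInv
        intro v hvle hav hvb hvc hiv hvj hbv
        have hpvc := ne_of_pos_ne hUD hdisj hvle hcle hvc
        have pv := pos_lt hUD hdisj hvle
        have hdec : btwn (pos n D U b) (pos n D U v) (pos n D U c) ∨
            btwn (pos n D U c) (pos n D U v) (pos n D U a) := by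
          simp only [btwn] at hcb hbv ⊢; omega
        rcases hdec with h | h
        · exact h
        · exact absurd h (EXA hUD hdisj ha hble hcle hvle hav hvb (by omega) (by omega)
            hcb hbv)
      · exact absurd heq hcna
      · rcases lt_trichotomy c b with hcbb | heq | hbcc
        · -- a < c < b
          rcases le_or_gt c i with hci | hic
          · -- c ≤ i : next edge (c,b), new middle c
            have hEcb' : Edg n D U T c b := by
              rcases hEcb with h | h
              · exact h
              · exact absurd h.1 (by omega)
            refine climbStep (a' := c) (b' := b) (mu' := c) hUD hdisj hT he hai hbi hge2
              hcle hcb hEac hEcb hEcb' hci hbi hmeasCB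
              ⟨a, ha, hrot1, EdgU_symm hEac, Or.inl he, by simp only [midOf]; split_ifs <;> omega⟩
              (by simp only [midOf]; split_ifs <;> omega)
              (by intro h; omega) (fun h => Or.inl h)
              (fun h => h.symm) (fun h => h.symm)
              ?_ ih hInv
            intro v hvle hav hvb hvc hiv hvj hbv
            have hpvc := ne_of_pos_ne hUD hdisj hvle hcle hvc
            have pv := pos_lt hUD hdisj hvle
            have hdec : btwn (pos n D U b) (pos n D U v) (pos n D U c) ∨
                btwn (pos n D U c) (pos n D U v) (pos n D U a) := by
              simp only [btwn] at hcb hbv ⊢; omega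
            rcases hdec with h | h
            · exact h
            · exact absurd h (EXA hUD hdisj ha hble hcle hvle hav hvb (by omega) (by omega)
                hcb hbv)
          · -- i < c (hence i+1 ≤ c) : next edge (a,c), new middle c
            have hEac' : Edg n D U T a c := by
              rcases hEac with h | h
              · exact h
              · exact absurd h.1 (by omega)
            refine climbStep (a' := a) (b' := c) (mu' := c) hUD hdisj hT he hai hbi hge2
              hcle hcb hEac hEcb hEac' hai (by omega) hmeasCA
              ⟨b, hble, hrot2, Or.inl he, EdgU_symm hEcb, by simp only [midOf]; split_ifs <;> omega⟩
              (by simp only [midOf]; split_ifs <;> omega)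
              (fun h => Or.inl h) (by intro h; omega)
              (fun h => h.symm) (fun h => h.symm)
              ?_ ih hInv
            intro v hvle hav hvb hvc hiv hvj hbv
            have hpvc := ne_of_pos_ne hUD hdisj hvle hcle hvc
            have pv := pos_lt hUD hdisj hvle
            have hdec : btwn (pos n D U b) (pos n D U v) (pos n D U c) ∨
                btwn (pos n D U c) (pos n D U v) (pos n D U a) := by
              simp only [btwn] at hcb hbv ⊢; omega
            rcases hdec with h | h
            · exact absurd h (EXB hUD hdisj ha hble hcle hvle hav (by omega) hvb hcb hbv)
            · exact h
        · exact absurd heq hcnb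
        · -- b < c : next edge (a,c), new middle b
          have hEac' : Edg n D U T a c := by
            rcases hEac with h | h
            · exact h
            · exact absurd h.1 (by omega)
          refine climbStep (a' := a) (b' := c) (mu' := b) hUD hdisj hT he hai hbi hge2
            hcle hcb hEac hEcb hEac' hai (by omega) hmeasCA
            ⟨b, hble, hrot2, Or.inl he, EdgU_symm hEcb, by simp only [midOf]; split_ifs <;> omega⟩
            (by simp only [midOf]; split_ifs <;> omega)
            (fun h => Or.inl h) (fun h => Or.inr h.symm)
            (by intro h; omega) (by intro h; omega)
            ?_ ih hInv
          intro v hvle hav hvb hvc hiv hvj hbv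
          have hpvc := ne_of_pos_ne hUD hdisj hvle hcle hvc
          have pv := pos_lt hUD hdisj hvle
          have hdec : btwn (pos n D U b) (pos n D U v) (pos n D U c) ∨
              btwn (pos n D U c) (pos n D U v) (pos n D U a) := by
            simp only [btwn] at hcb hbv ⊢; omega
          rcases hdec with h | h
          · exact absurd h (EXB hUD hdisj ha hble hcle hvle hav (by omega) hvb hcb hbv)
          · exact h

end Aux6


/-- For every triangulation `T` of `P` and every `i ∈ [n]`, the spine
of `T` contains a directed path from `i` to `i+1` or a directed path from `i+1` to `i`. -/
theorem consecutive_labels_comparable (n : ℕ) (hn : 1 ≤ n) (D U : Finset ℕ)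
    (hUD : D ∪ U = Finset.Icc 1 (n + 1)) (hdisj : Disjoint D U)
    (T : Finset (ℕ × ℕ)) (hT : IsTriangulation n D U T) (i : ℕ) (hi : i ∈ Finset.Icc 1 n) :
    Relation.ReflTransGen (SpineArc n D U T) i (i + 1) ∨
    Relation.ReflTransGen (SpineArc n D U T) (i + 1) i := by
  obtain ⟨hi1, hi2⟩ := Finset.mem_Icc.1 hi
  have hA0ne : (insert 0 (D.filter (fun d => d ≤ i))).Nonempty :=
    ⟨0, Finset.mem_insert_self _ _⟩
  have hB0ne : (insert (n + 2) (D.filter (fun d => i < d))).Nonempty :=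
    ⟨n + 2, Finset.mem_insert_self _ _⟩
  obtain ⟨a, haMem, hamax0⟩ : ∃ a, a ∈ insert 0 (D.filter (fun d => d ≤ i)) ∧
      ∀ x ∈ insert 0 (D.filter (fun d => d ≤ i)), x ≤ a :=
    ⟨_, Finset.max'_mem _ hA0ne, fun x hx => Finset.le_max' _ x hx⟩
  obtain ⟨b, hbMem, hbmin0⟩ : ∃ b, b ∈ insert (n + 2) (D.filter (fun d => i < d)) ∧
      ∀ x ∈ insert (n + 2) (D.filter (fun d => i < d)), b ≤ x :=
    ⟨_, Finset.min'_mem _ hB0ne, fun x hx => Finset.min'_le _ x hx⟩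
  have haCase : a = 0 ∨ (a ∈ D ∧ a ≤ i) := by
    rcases Finset.mem_insert.1 haMem with h | h
    · exact Or.inl h
    · exact Or.inr (by simpa using Finset.mem_filter.1 h)
  have hbCase : b = n + 2 ∨ (b ∈ D ∧ i < b) := by
    rcases Finset.mem_insert.1 hbMem with h | h
    · exact Or.inl h
    · exact Or.inr (by simpa using Finset.mem_filter.1 h)
  have hai : a ≤ i := by
    rcases haCase with h | ⟨_, h⟩ <;> omega
  have hbi : i + 1 ≤ b := by
    rcases hbCase with h | ⟨_, h⟩ <;> omega
  have hble : b ≤ n + 2 := by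
    rcases hbCase with h | ⟨h, _⟩
    · omega
    · have := mem_D_bounds hUD h; omega
  have ha : a ≤ n + 2 := by omega
  have hamax : ∀ d ∈ D, d ≤ i → d ≤ a := fun d hd hdi =>
    hamax0 d (Finset.mem_insert_of_mem (Finset.mem_filter.2 ⟨hd, hdi⟩))
  have hbmin : ∀ d ∈ D, i < d → b ≤ d := fun d hd hdi =>
    hbmin0 d (Finset.mem_insert_of_mem (Finset.mem_filter.2 ⟨hd, hdi⟩))
  have hposs : pos n D U b = pos n D U a + 1 := by
    rcases haCase with h0 | ⟨haD, hale⟩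
    · have hDhigh : ∀ d ∈ D, i < d := by
        intro d hd
        by_contra h
        push_neg at h
        have h1 := hamax d hd h
        have h2 := (mem_D_bounds hUD hd).1
        omega
      rcases hbCase with h2 | ⟨hbD, hib⟩
      · have hDempty : D = ∅ := by
          apply Finset.eq_empty_of_forall_notMem
          intro d hd
          have u1 := hDhigh d hd
          have u2 := hbmin d hd u1
          have u3 := (mem_D_bounds hUD hd).2
          omega
        rw [h0, h2, pos_zero, pos_top, hDempty]
        simp
      · have hzero : (D.filter (fun x => x < b)).card = 0 := by
          rw [Finset.card_eq_zero]
          apply Finset.eq_empty_of_forall_notMem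
          intro d hd
          obtain ⟨hd1, hd2⟩ := Finset.mem_filter.1 hd
          have := hbmin d hd1 (hDhigh d hd1)
          omega
        rw [h0, pos_zero, pos_D hUD hbD, hzero]
    · have hfil : D.filter (fun x => x < b) = insert a (D.filter (fun x => x < a)) := by
        ext d
        simp only [Finset.mem_filter, Finset.mem_insert]
        constructor
        · rintro ⟨hd, hdb⟩
          rcases le_or_gt d i with h | h
          · have h' := hamax d hd h
            rcases eq_or_lt_of_le h' with h'' | h''
            · exact Or.inl h''
            · exact Or.inr ⟨hd, h''⟩
          · exact absurd (hbmin d hd h) (by omega)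
        · rintro (rfl | ⟨hd, hda⟩)
          · exact ⟨haD, by omega⟩
          · exact ⟨hd, by omega⟩
      have hanotin : a ∉ D.filter (fun x => x < a) := by simp
      rcases hbCase with h2 | ⟨hbD, hib⟩
      · have hful : D.filter (fun x => x < b) = D := by
          apply Finset.filter_true_of_mem
          intro d hd
          have := (mem_D_bounds hUD hd).2
          omega
        rw [h2, pos_top, pos_D hUD haD]
        have hc : D.card = (insert a (D.filter (fun x => x < a))).card := by
          rw [← hfil, hful]
        rw [Finset.card_insert_of_notMem hanotin] at hc
        omega
      · rw [pos_D hUD hbD, pos_D hUD haD, hfil, Finset.card_insert_of_notMem hanotin]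
        omega
  have pa := pos_lt hUD hdisj ha
  have pb := pos_lt hUD hdisj hble
  have hrel : relpos n D U a b = 1 := by
    rcases relpos_spec hUD hdisj ha hble with ⟨u1, u2⟩ | ⟨u1, u2⟩ <;> omega
  have hEdg : Edg n D U T a b := ⟨by omega, hble, Or.inr ⟨⟨by omega, hble⟩, Or.inl hrel⟩⟩
  have hkill' : ∀ v, v ≤ n + 2 → v ≠ a → v ≠ b →
      btwn (pos n D U b) (pos n D U v) (pos n D U a) := by
    intro v hv hva hvb
    have u1 := ne_of_pos_ne hUD hdisj hv ha hva
    have u2 := ne_of_pos_ne hUD hdisj hv hble hvb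
    have pv := pos_lt hUD hdisj hv
    simp only [btwn]
    omega
  have hUI : btwn (pos n D U b) (pos n D U i) (pos n D U a) ∨ (i = a ∧ i ∉ U) := by
    by_cases hia : i = a
    · refine Or.inr ⟨hia, ?_⟩
      rcases haCase with h0 | ⟨haD, _⟩
      · omega
      · exact mem_D_notU hdisj (by rw [hia]; exact haD)
    · exact Or.inl (hkill' i (by omega) hia (by omega))
  have hUJ : btwn (pos n D U b) (pos n D U (i + 1)) (pos n D U a) ∨
      (i + 1 = b ∧ (i + 1) ∉ U) := by
    by_cases hjb : i + 1 = b
    · refine Or.inr ⟨hjb, ?_⟩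
      rcases hbCase with h0 | ⟨hbD, _⟩
      · omega
      · exact mem_D_notU hdisj (by rw [hjb]; exact hbD)
    · exact Or.inl (hkill' (i + 1) (by omega) (by omega) hjb)
  have hrellt : relpos n D U b a < n + 3 := by
    unfold relpos
    exact Nat.mod_lt _ (by omega)
  exact climb hUD hdisj hT hi1 hi2 (n + 3) a b (by omega) hEdg hai hbi
    (Or.inl ⟨hUI, hUJ⟩)

end Spines
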